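/- There do not exist a unitary operator V on ℂ⁴, orthonormal bases {a₁, a₂}, {b₁, b₂}, {b'₁, b'₂} of ℂ², orthonormal bases {y_{ij}}_{i,j ∈ {1,2}} and {y'_{ij}}_{i,j ∈ {1,2}} of ℂ⁴ and a unit vector p ∈ ℂ⁴ satisfying V y_{ij} = aᵢ ⊗ bⱼ and V y'_{ij} = aᵢ ⊗ b'ⱼ for all i, j, together with the experimentally measured coincidence probabilities of the measurements A'B and A'B' on 'The Animal Acts', namely |⟨y_{11}, p⟩|² = 63/81, |⟨y_{12}, p⟩|² = 7/81, |⟨y_{21}, p⟩|² = 7/81, |⟨y_{22}, p⟩|² = 4/81 and |⟨y'_{11}, p⟩|² = 12/81, |⟨y'_{12}, p⟩|² = 7/81, |⟨y'_{21}, p⟩|² = 8/81, |⟨y'_{22}, p⟩|² = 54/81. In other words, since these data violate the marginal law (63/81 + 7/81 = 70/81 ≠ 19/81 = 12/81 + 7/81), the two coincidence measurements A'B and A'B' cannot both be product measurements with respect to one and the same isomorphism of ℂ⁴ with ℂ²⊗ℂ²; at least one of them must be an entangled measurement. -/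

import Mathlib

/-!
If `V` identifies `y i j` with `aᵢ ⊗ bⱼ`, then `⟪y 0 j, p⟫ = ⟪bⱼ, w⟫`, where `w ∈ ℂ²` is the
partial inner product of `V p` with `a₀` in the first tensor factor. By Parseval in ℂ², the
marginal `‖⟪y 0 0, p⟫‖² + ‖⟪y 0 1, p⟫‖² = ‖w‖²` does not depend on the basis `b`, so the
same isomorphism with `b'` in place of `b` forces `63/81 + 7/81 = 12/81 + 7/81`.
-/

open scoped InnerProductSpace

noncomputable section

/-- Tensor product `u ⊗ v` of two vectors of ℂ², as a vector of ℂ⁴ (the model of ℂ²⊗ℂ²):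
`(u ⊗ v)(i,j) = u i * v j`. -/
def tp (u v : EuclideanSpace ℂ (Fin 2)) : EuclideanSpace ℂ (Fin 2 × Fin 2) :=
  WithLp.toLp 2 (fun p : Fin 2 × Fin 2 => u p.1 * v p.2)

theorem Orthonormal.sum_sq_norm_inner_right_of_card_eq_finrank {𝕜 E ι : Type*} [RCLike 𝕜]
    [NormedAddCommGroup E] [InnerProductSpace 𝕜 E] [FiniteDimensional 𝕜 E] [Fintype ι]
    {v : ι → E} (hv : Orthonormal 𝕜 v) (hcard : Fintype.card ι = Module.finrank 𝕜 E) (x : E) :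
    ∑ i, ‖⟪v i, x⟫_𝕜‖ ^ 2 = ‖x‖ ^ 2 := by
  simpa using (OrthonormalBasis.mk hv
    (hv.linearIndependent.span_eq_top_of_card_eq_finrank' hcard).ge).sum_sq_norm_inner_right x

def partialInnerLeft (u : EuclideanSpace ℂ (Fin 2)) (q : EuclideanSpace ℂ (Fin 2 × Fin 2)) :
    EuclideanSpace ℂ (Fin 2) :=
  WithLp.toLp 2 (fun k => ∑ i, starRingEnd ℂ (u i) * q (i, k))

theorem inner_tp_left (u v : EuclideanSpace ℂ (Fin 2)) (q : EuclideanSpace ℂ (Fin 2 × Fin 2)) :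
    ⟪tp u v, q⟫_ℂ = ⟪v, partialInnerLeft u q⟫_ℂ := by
  simp only [tp, partialInnerLeft, PiLp.inner_apply, RCLike.inner_apply, map_mul,
    Fintype.sum_prod_type, Finset.sum_mul]
  rw [Finset.sum_comm]
  exact Finset.sum_congr rfl fun k _ => Finset.sum_congr rfl fun i _ => by ring

theorem sum_sq_norm_inner_tp_left {b : Fin 2 → EuclideanSpace ℂ (Fin 2)} (hb : Orthonormal ℂ b)
    (u : EuclideanSpace ℂ (Fin 2)) (q : EuclideanSpace ℂ (Fin 2 × Fin 2)) :
    ∑ j, ‖⟪tp u (b j), q⟫_ℂ‖ ^ 2 = ‖partialInnerLeft u q‖ ^ 2 := by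
  simp only [inner_tp_left]
  exact hb.sum_sq_norm_inner_right_of_card_eq_finrank (by simp) _

theorem sum_sq_norm_inner_of_map_eq_tp {E : Type*} [NormedAddCommGroup E] [InnerProductSpace ℂ E]
    (V : E →ₗᵢ[ℂ] EuclideanSpace ℂ (Fin 2 × Fin 2)) {u : EuclideanSpace ℂ (Fin 2)}
    {b : Fin 2 → EuclideanSpace ℂ (Fin 2)} (hb : Orthonormal ℂ b) {y : Fin 2 → E}
    (hy : ∀ j, V (y j) = tp u (b j)) (p : E) :
    ‖⟪y 0, p⟫_ℂ‖ ^ 2 + ‖⟪y 1, p⟫_ℂ‖ ^ 2 = ‖partialInnerLeft u (V p)‖ ^ 2 := by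
  rw [← sum_sq_norm_inner_tp_left hb, Fin.sum_univ_two, ← hy, ← hy, V.inner_map_map,
    V.inner_map_map]

/-- there is no single isomorphism `V` of ℂ⁴ with ℂ²⊗ℂ² with respect to which
both coincidence measurements `A'B` (eigenbasis `{y_{ij}}`, `V y_{ij} = aᵢ ⊗ bⱼ`) and `A'B'`
(eigenbasis `{y'_{ij}}`, `V y'_{ij} = aᵢ ⊗ b'ⱼ`) are product measurements while reproducing
the experimentally measured probabilities of 'The Animal Acts':
`63/81, 7/81, 7/81, 4/81` for `A'B` and `12/81, 7/81, 8/81, 54/81` for `A'B'`.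
These data violate the marginal law (`70/81 ≠ 19/81`), so at least one of the two
measurements must be entangled. -/
theorem no_common_isomorphism_for_A'B_and_A'B'_data :
    ¬ ∃ (V : EuclideanSpace ℂ (Fin 2 × Fin 2) ≃ₗᵢ[ℂ] EuclideanSpace ℂ (Fin 2 × Fin 2))
        (a b b' : Fin 2 → EuclideanSpace ℂ (Fin 2))
        (y y' : Fin 2 → Fin 2 → EuclideanSpace ℂ (Fin 2 × Fin 2))
        (p : EuclideanSpace ℂ (Fin 2 × Fin 2)),
      Orthonormal ℂ a ∧ Orthonormal ℂ b ∧ Orthonormal ℂ b' ∧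
      Orthonormal ℂ (fun q : Fin 2 × Fin 2 => y q.1 q.2) ∧
      Orthonormal ℂ (fun q : Fin 2 × Fin 2 => y' q.1 q.2) ∧ ‖p‖ = 1 ∧
      (∀ i j : Fin 2, V (y i j) = tp (a i) (b j)) ∧
      (∀ i j : Fin 2, V (y' i j) = tp (a i) (b' j)) ∧
      ‖⟪y 0 0, p⟫_ℂ‖ ^ 2 = 63 / 81 ∧
      ‖⟪y 0 1, p⟫_ℂ‖ ^ 2 = 7 / 81 ∧
      ‖⟪y 1 0, p⟫_ℂ‖ ^ 2 = 7 / 81 ∧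
      ‖⟪y 1 1, p⟫_ℂ‖ ^ 2 = 4 / 81 ∧
      ‖⟪y' 0 0, p⟫_ℂ‖ ^ 2 = 12 / 81 ∧
      ‖⟪y' 0 1, p⟫_ℂ‖ ^ 2 = 7 / 81 ∧
      ‖⟪y' 1 0, p⟫_ℂ‖ ^ 2 = 8 / 81 ∧
      ‖⟪y' 1 1, p⟫_ℂ‖ ^ 2 = 54 / 81 := by
  rintro ⟨V, a, b, b', y, y', p, -, hb, hb', -, -, -, hVy, hVy', h00, h01, -, -, h'00, h'01, -, -⟩
  have marginal := sum_sq_norm_inner_of_map_eq_tp V.toLinearIsometry hb (hVy 0) p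
  have marginal' := sum_sq_norm_inner_of_map_eq_tp V.toLinearIsometry hb' (hVy' 0) p
  rw [h00, h01] at marginal
  rw [h'00, h'01] at marginal'
  linarith

end
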